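/- The set of rewards induced by probabilistic indices equals the set of allocations induced by two-stage rules with CEA in the first stage and second-stage claims rules satisfying non-negativity and dummy: RPI(N,M,t) = CND(N,K,c,E). -/
import Mathlib


/-- The set of rewards induced by probabilistic indices equals the set of
allocations induced by two-stage rules with CEA in the first stage and
second-stage claims rules satisfying non-negativity and dummy:
`RPI(N,M,t) = CND(N,K,c,E)`. -/
theorem RPI_eq_CND
    (N M : Type) [Fintype N] [Fintype M] (t : N → M → ℕ)
    (hT : ∀ j, 0 < ∑ i, t i j) :
    {x : N → ℝ | ∃ ρ : M → (N → ℕ) → N → ℝ,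
      (∀ j (y : N → ℕ), 0 < ∑ i, y i →
        (∀ i, 0 ≤ ρ j y i ∧ ρ j y i ≤ 1) ∧ (∀ i, y i = 0 → ρ j y i = 0) ∧
          ∑ i, ρ j y i = 1) ∧
      ∀ i, x i = ∑ j, ρ j (fun i' => t i' j) i}
    =
    {x : N → ℝ | ∃ (φ : M → (N → ℕ) → ℝ → N → ℝ) (lam : ℝ),
      0 ≤ lam ∧
      (∑ j, min lam (∑ i, (t i j : ℝ)) = (Fintype.card M : ℝ)) ∧
      (∀ j (c : N → ℕ) (E : ℝ) , 0 ≤ E → E ≤ ∑ i, (c i : ℝ) →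
        (∀ i, 0 ≤ φ j c E i) ∧ (∀ i, c i = 0 → φ j c E i = 0) ∧
          ∑ i, φ j c E i = E) ∧
      ∀ i, x i = ∑ j, φ j (fun i' => t i' j) (min lam (∑ i', (t i' j : ℝ))) i} := by
  classical
  have hT1 : ∀ j, (1 : ℝ) ≤ ∑ i, (t i j : ℝ) := by
    intro j
    have := hT j
    have : (1 : ℕ) ≤ ∑ i, t i j := this
    exact_mod_cast this
  ext x
  simp only [Set.mem_setOf_eq]
  constructor
  · rintro ⟨ρ, hρ, hx⟩
    refine ⟨fun j c E i => if 0 < ∑ i', c i' then E * ρ j c i else 0, 1, zero_le_one, ?_, ?_, ?_⟩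
    · have : ∀ j : M, min (1:ℝ) (∑ i, (t i j : ℝ)) = 1 := fun j => min_eq_left (hT1 j)
      simp [this]
    · intro j c E hE0 hEc
      by_cases hc : 0 < ∑ i', c i'
      · obtain ⟨h1, h2, h3⟩ := hρ j c hc
        refine ⟨fun i => ?_, fun i hci => ?_, ?_⟩
        · simp only [if_pos hc]; exact mul_nonneg hE0 (h1 i).1
        · simp [if_pos hc, h2 i hci]
        · simp only [if_pos hc, ← Finset.mul_sum, h3, mul_one]
      · have hc0 : ∑ i', c i' = 0 := Nat.eq_zero_of_not_pos hc
        have hE : E = 0 := by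
          have : (∑ i, (c i : ℝ)) = 0 := by exact_mod_cast hc0
          linarith [hEc, hE0, this.ge]
        refine ⟨fun i => ?_, fun i _ => ?_, ?_⟩ <;> simp [hc, hE]
    · intro i
      rw [hx i]
      apply Finset.sum_congr rfl
      intro j _
      have hmin : min (1:ℝ) (∑ i', (t i' j : ℝ)) = 1 := min_eq_left (hT1 j)
      simp [hmin, hT j]
  · rintro ⟨φ, lam, hlam0, hsum, hφ, hx⟩
    have hE1 : ∀ j : M, min lam (∑ i, (t i j : ℝ)) = 1 := by
      intro j
      have hne : Nonempty M := ⟨j⟩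
      have hcard : 0 < Fintype.card M := Fintype.card_pos
      have hlam1 : (1 : ℝ) ≤ lam := by
        by_contra h
        push_neg at h
        have hlt : ∑ j', min lam (∑ i, (t i j' : ℝ)) < Fintype.card M := by
          calc ∑ j', min lam (∑ i, (t i j' : ℝ)) ≤ ∑ _j' : M, lam :=
                Finset.sum_le_sum fun j' _ => min_le_left _ _
            _ = (Fintype.card M : ℝ) * lam := by
                simp [Finset.sum_const, mul_comm]
            _ < (Fintype.card M : ℝ) * 1 := by
                apply mul_lt_mul_of_pos_left h
                exact_mod_cast hcard
            _ = (Fintype.card M : ℝ) := mul_one _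
        exact absurd hsum (ne_of_lt hlt)
      have hge : ∀ j' : M, (1 : ℝ) ≤ min lam (∑ i, (t i j' : ℝ)) :=
        fun j' => le_min hlam1 (hT1 j')
      -- each term ≥ 1, sum = card M, so each term = 1
      have hz : ∑ j' : M, (min lam (∑ i, (t i j' : ℝ)) - 1) = 0 := by
        rw [Finset.sum_sub_distrib]
        simp [hsum]
      have := (Finset.sum_eq_zero_iff_of_nonneg
        (fun j' _ => sub_nonneg.mpr (hge j'))).mp hz j (Finset.mem_univ j)
      linarith
    refine ⟨fun j y i => if y = (fun i' => t i' j) then φ j y 1 i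
        else (y i : ℝ) / (∑ i', (y i' : ℝ)), ?_, ?_⟩
    · intro j y hy
      have hyR : (0 : ℝ) < ∑ i', (y i' : ℝ) := by exact_mod_cast hy
      by_cases h : y = (fun i' => t i' j)
      · have hyc : (1 : ℝ) ≤ ∑ i', (y i' : ℝ) := by rw [h]; exact hT1 j
        obtain ⟨h1, h2, h3⟩ := hφ j y 1 zero_le_one hyc
        refine ⟨fun i => ⟨?_, ?_⟩, fun i hyi => by simp [if_pos h, h2 i hyi], by simp [if_pos h, h3]⟩
        · simp only [if_pos h]; exact h1 i
        · simp only [if_pos h]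
          calc φ j y 1 i ≤ ∑ i', φ j y 1 i' :=
              Finset.single_le_sum (fun i' _ => h1 i') (Finset.mem_univ i)
            _ = 1 := h3
      · refine ⟨fun i => ⟨?_, ?_⟩, fun i hyi => ?_, ?_⟩
        · simp only [if_neg h]
          positivity
        · simp only [if_neg h]
          rw [div_le_one hyR]
          exact Finset.single_le_sum (f := fun i' => (y i' : ℝ)) (fun i' _ => Nat.cast_nonneg _) (Finset.mem_univ i)
        · simp [if_neg h, hyi]
        · simp only [if_neg h]
          rw [← Finset.sum_div, div_self (ne_of_gt hyR)]
    · intro i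
      rw [hx i]
      apply Finset.sum_congr rfl
      intro j _
      simp [hE1 j]
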